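/- The cross product P₀ on ℝ⁷ determined by the G₂ 3-form Ω₀ satisfies the norm identity ‖P₀(u,v)‖² = ‖u‖²‖v‖² − g(u,v)² for all u, v ∈ ℝ⁷. -/

import Mathlib

/-!
The inner product is nondegenerate, so `P₀` is the explicit octonionic cross product of `ℝ⁷`, whose
`k`-th coordinate is the sum of the three `2 × 2` minors of `(u, v)` paired with `k` by the
Fano plane underlying `Ω₀`. For that explicit bilinear map the identity
`‖u × v‖² = ‖u‖²‖v‖² − ⟪u, v⟫²` is a polynomial identity of degree four in the fourteen coordinates.
-/

open RealInnerProductSpace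

/-- The coordinate 3-form `xⁱ ∧ xʲ ∧ xᵏ` evaluated on three vectors of `ℝ⁷`. -/
noncomputable def wedge3 (i j k : Fin 7) (u v w : EuclideanSpace ℝ (Fin 7)) : ℝ :=
  u i * v j * w k - u i * v k * w j - u j * v i * w k
    + u j * v k * w i + u k * v i * w j - u k * v j * w i

/-- The standard `G₂` 3-form
`Ω₀ = x¹²⁷ + x¹³⁶ + x¹⁴⁵ + x²³⁵ − x²⁴⁶ + x³⁴⁷ + x⁵⁶⁷` on `ℝ⁷`
(with coordinates indexed by `0,…,6`). -/
noncomputable def Omega0 (u v w : EuclideanSpace ℝ (Fin 7)) : ℝ :=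
  wedge3 0 1 6 u v w + wedge3 0 2 5 u v w + wedge3 0 3 4 u v w
    + wedge3 1 2 4 u v w - wedge3 1 3 5 u v w + wedge3 2 3 6 u v w
    + wedge3 4 5 6 u v w

namespace G2

local notation "ℝ⁷" => EuclideanSpace ℝ (Fin 7)

noncomputable def minor (u v : ℝ⁷) (a b : Fin 7) : ℝ := u a * v b - u b * v a

noncomputable def cross (u v : ℝ⁷) : ℝ⁷ :=
  let m := minor u v
  !₂[m 1 6 + m 2 5 + m 3 4, m 6 0 + m 2 4 + m 5 3, m 5 0 + m 4 1 + m 3 6,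
    m 4 0 + m 1 5 + m 6 2, m 0 3 + m 1 2 + m 5 6, m 0 2 + m 3 1 + m 6 4,
    m 0 1 + m 2 3 + m 4 5]

theorem inner_cross (u v w : ℝ⁷) : ⟪cross u v, w⟫ = Omega0 u v w := by
  simp only [cross, minor, Omega0, wedge3, PiLp.inner_apply, RCLike.inner_apply, conj_trivial,
    Fin.sum_univ_seven, Matrix.cons_val_zero, Matrix.cons_val_one, Matrix.cons_val]
  ring

theorem norm_cross_sq (u v : ℝ⁷) : ‖cross u v‖ ^ 2 = ‖u‖ ^ 2 * ‖v‖ ^ 2 - ⟪u, v⟫ ^ 2 := by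
  simp only [← real_inner_self_eq_norm_sq, cross, minor, PiLp.inner_apply, RCLike.inner_apply,
    conj_trivial, Fin.sum_univ_seven, Matrix.cons_val_zero, Matrix.cons_val_one, Matrix.cons_val]
  ring

theorem eq_cross_of_inner_eq_Omega0 {P : ℝ⁷ → ℝ⁷ → ℝ⁷}
    (hP : ∀ u v w, ⟪P u v, w⟫ = Omega0 u v w) (u v : ℝ⁷) : P u v = cross u v :=
  ext_inner_right ℝ fun w => by rw [hP, inner_cross]

end G2

/-- the cross product `P₀` determined by `Ω₀` satisfies the norm
identity `‖P₀ u v‖² = ‖u‖²‖v‖² − ⟪u,v⟫²`. -/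
theorem crossProduct_norm
    (P₀ : EuclideanSpace ℝ (Fin 7) → EuclideanSpace ℝ (Fin 7) → EuclideanSpace ℝ (Fin 7))
    (hP : ∀ u v w, ⟪P₀ u v, w⟫ = Omega0 u v w) :
    ∀ u v, ‖P₀ u v‖ ^ 2 = ‖u‖ ^ 2 * ‖v‖ ^ 2 - ⟪u, v⟫ ^ 2 := by
  intro u v
  rw [G2.eq_cross_of_inner_eq_Omega0 hP, G2.norm_cross_sq]
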